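/- arXiv:1301.4601 — 2 statements merged into one kernel-verified Lean document; each statement's English description precedes it below -/
import Mathlib

section
/- Shimizu's lemma: if a, b, c, d are complex numbers with ad - bc = 1 and 0 < |c| < 1, then the subgroup of SL_2(ℂ) generated by the matrices [[1,1],[0,1]] and [[a,b],[c,d]] is not discrete. -/
open Matrix MatrixGroups Filter

/-- The topology on `SL(2, ℂ)` induced from the space of matrices. -/
noncomputable instance : TopologicalSpace SL(2, ℂ) := instTopologicalSpaceSubtype

/-- The sequence of (top-left, bottom-left) entries under repeated conjugation. -/
noncomputable def shimizuAC (a c : ℂ) : ℕ → ℂ × ℂ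
  | 0 => (a, c)
  | n + 1 => (1 - (shimizuAC a c n).1 * (shimizuAC a c n).2, -(shimizuAC a c n).2 ^ 2)

/-- Repeated conjugation sequence in a group. -/
def shimizuB {G : Type*} [Group G] (t x : G) : ℕ → G
  | 0 => x
  | n + 1 => shimizuB t x n * t * (shimizuB t x n)⁻¹

lemma shimizu_conj_entries (X : SL(2, ℂ)) :
    ((X * ⟨!![1, 1; 0, 1], by simp [Matrix.det_fin_two_of]⟩ * X⁻¹ : SL(2, ℂ)) :
      Matrix (Fin 2) (Fin 2) ℂ) =
    !![1 - (X : Matrix (Fin 2) (Fin 2) ℂ) 0 0 * (X : Matrix (Fin 2) (Fin 2) ℂ) 1 0,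
        ((X : Matrix (Fin 2) (Fin 2) ℂ) 0 0)^2;
       -((X : Matrix (Fin 2) (Fin 2) ℂ) 1 0)^2,
        1 + (X : Matrix (Fin 2) (Fin 2) ℂ) 0 0 * (X : Matrix (Fin 2) (Fin 2) ℂ) 1 0] := by
  have hdet : (X : Matrix (Fin 2) (Fin 2) ℂ) 0 0 * (X : Matrix (Fin 2) (Fin 2) ℂ) 1 1
      - (X : Matrix (Fin 2) (Fin 2) ℂ) 0 1 * (X : Matrix (Fin 2) (Fin 2) ℂ) 1 0 = 1 := by
    have := X.2
    rwa [Matrix.det_fin_two] at this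
  ext i j
  show (((X : Matrix (Fin 2) (Fin 2) ℂ) * !![1, 1; 0, 1] *
    ((X⁻¹ : SL(2, ℂ)) : Matrix (Fin 2) (Fin 2) ℂ) : Matrix (Fin 2) (Fin 2) ℂ)) i j = _
  rw [Matrix.SpecialLinearGroup.coe_inv, Matrix.adjugate_fin_two]
  fin_cases i <;> fin_cases j <;>
    simp [Matrix.mul_apply, Fin.sum_univ_two] <;>
    first | ring1 | linear_combination hdet

theorem stmt_4 (a b c d : ℂ) (h : a * d - b * c = 1)
    (hc0 : 0 < ‖c‖) (hc1 : ‖c‖ < 1) :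
    ¬ DiscreteTopology
      (Subgroup.closure
        {(⟨!![1, 1; 0, 1], by simp [Matrix.det_fin_two_of]⟩ : SL(2, ℂ)),
         (⟨!![a, b; c, d], by simpa [Matrix.det_fin_two_of] using h⟩ : SL(2, ℂ))} :
        Subgroup SL(2, ℂ)) := by
  intro hD
  set T : SL(2, ℂ) := ⟨!![1, 1; 0, 1], by simp [Matrix.det_fin_two_of]⟩ with hTdef
  set A0 : SL(2, ℂ) := ⟨!![a, b; c, d], by simpa [Matrix.det_fin_two_of] using h⟩ with hA0def
  set H : Subgroup SL(2, ℂ) := Subgroup.closure {T, A0} with hHdef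
  have hTH : T ∈ H := Subgroup.subset_closure (Set.mem_insert _ _)
  have hAH : A0 ∈ H := Subgroup.subset_closure (Set.mem_insert_of_mem _ rfl)
  set B : ℕ → H := shimizuB (⟨T, hTH⟩ : H) ⟨A0, hAH⟩ with hBdef
  set u : ℕ → ℂ := fun n => (shimizuAC a c n).1 * (shimizuAC a c n).2 with hudef
  -- key entry formula
  have key : ∀ n, (((B n : SL(2, ℂ)) : Matrix (Fin 2) (Fin 2) ℂ) 0 0 = (shimizuAC a c n).1
      ∧ ((B n : SL(2, ℂ)) : Matrix (Fin 2) (Fin 2) ℂ) 1 0 = (shimizuAC a c n).2) := by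
    intro n
    induction n with
    | zero => constructor <;> simp [hBdef, shimizuB, shimizuAC, hA0def]
    | succ n ih =>
      have hcoe : ((B (n + 1) : SL(2, ℂ)) : Matrix (Fin 2) (Fin 2) ℂ)
          = (((B n : SL(2, ℂ)) * T * (B n : SL(2, ℂ))⁻¹ : SL(2, ℂ)) :
              Matrix (Fin 2) (Fin 2) ℂ) := by
        have : (B (n + 1) : SL(2, ℂ)) = (B n : SL(2, ℂ)) * T * (B n : SL(2, ℂ))⁻¹ := by
          simp [hBdef, shimizuB]
        rw [this]
      rw [hcoe, hTdef, shimizu_conj_entries, ih.1, ih.2]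
      constructor <;> simp [shimizuAC]
  have hc : c ≠ 0 := by
    intro hc'; simp [hc'] at hc0
  have cne : ∀ n, (shimizuAC a c n).2 ≠ 0 := by
    intro n
    induction n with
    | zero => simpa [shimizuAC] using hc
    | succ n ih => simpa [shimizuAC] using pow_ne_zero 2 ih
  set r : ℝ := ‖c‖ with hrdef
  have hr0 : 0 ≤ r := norm_nonneg c
  have cbound : ∀ n, ‖(shimizuAC a c n).2‖ ≤ r ^ (n + 1) := by
    intro n
    induction n with
    | zero => simp [shimizuAC, hrdef]
    | succ n ih =>
      have h1 : ‖(shimizuAC a c (n + 1)).2‖ = ‖(shimizuAC a c n).2‖ ^ 2 := by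
        simp [shimizuAC, norm_pow]
      have h2 : r ^ (n + 1) ≤ r := by
        calc r ^ (n + 1) ≤ r ^ 1 := pow_le_pow_of_le_one hr0 hc1.le (by omega)
        _ = r := pow_one r
      rw [h1]
      calc ‖(shimizuAC a c n).2‖ ^ 2 ≤ (r ^ (n + 1)) ^ 2 := by
            apply pow_le_pow_left₀ (norm_nonneg _) ih
        _ = r ^ (n + 1) * r ^ (n + 1) := sq _
        _ ≤ r ^ (n + 1) * r := by
            apply mul_le_mul_of_nonneg_left h2 (pow_nonneg hr0 _)
        _ = r ^ (n + 2) := by ring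
  have cle : ∀ n, ‖(shimizuAC a c n).2‖ ≤ r := fun n =>
    (cbound n).trans (by
      calc r ^ (n + 1) ≤ r ^ 1 := pow_le_pow_of_le_one hr0 hc1.le (by omega)
      _ = r := pow_one r)
  set M : ℝ := max ‖a * c‖ (r ^ 2 / (1 - r ^ 2)) with hMdef
  have hr2 : r ^ 2 < 1 := by nlinarith
  have hr2' : 0 < 1 - r ^ 2 := by linarith
  have hM2 : r ^ 2 / (1 - r ^ 2) ≤ M := le_max_right _ _
  have hM0 : 0 ≤ M := le_trans (norm_nonneg _) (le_max_left _ _)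
  have ubound : ∀ n, ‖u n‖ ≤ M := by
    intro n
    induction n with
    | zero =>
      have hu0 : u 0 = a * c := by simp [hudef, shimizuAC]
      rw [hu0]; exact le_max_left _ _
    | succ n ih =>
      have h1 : ‖u (n + 1)‖ = ‖1 - u n‖ * ‖(shimizuAC a c n).2‖ ^ 2 := by
        simp [hudef, shimizuAC, norm_mul, norm_pow]
        try ring
      have h2 : ‖(1 : ℂ) - u n‖ ≤ 1 + M := by
        calc ‖(1 : ℂ) - u n‖ ≤ ‖(1 : ℂ)‖ + ‖u n‖ := norm_sub_le _ _
        _ ≤ 1 + M := by rw [norm_one]; linarith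
      have h3 : ‖(shimizuAC a c n).2‖ ^ 2 ≤ r ^ 2 :=
        pow_le_pow_left₀ (norm_nonneg _) (cle n) 2
      rw [h1]
      have key2 : (1 + M) * r ^ 2 ≤ M := by
        rw [div_le_iff₀ hr2'] at hM2
        nlinarith
      calc ‖1 - u n‖ * ‖(shimizuAC a c n).2‖ ^ 2 ≤ (1 + M) * (r ^ 2) := by
            apply mul_le_mul h2 h3 (by positivity) (by linarith)
        _ ≤ M := key2
  have ugeom : ∀ n, ‖u n‖ ≤ (‖a * c‖ + 1 + M) * (r ^ 2) ^ n := by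
    intro n
    match n with
    | 0 => simp [hudef, shimizuAC]; linarith
    | n + 1 =>
      have h1 : ‖u (n + 1)‖ = ‖1 - u n‖ * ‖(shimizuAC a c n).2‖ ^ 2 := by
        simp [hudef, shimizuAC, norm_mul, norm_pow]
        try ring
      have h2 : ‖(1 : ℂ) - u n‖ ≤ 1 + M := by
        calc ‖(1 : ℂ) - u n‖ ≤ ‖(1 : ℂ)‖ + ‖u n‖ := norm_sub_le _ _
        _ ≤ 1 + M := by rw [norm_one]; linarith [ubound n]
      have h3 : ‖(shimizuAC a c n).2‖ ^ 2 ≤ (r ^ 2) ^ (n + 1) := by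
        calc ‖(shimizuAC a c n).2‖ ^ 2 ≤ (r ^ (n + 1)) ^ 2 :=
              pow_le_pow_left₀ (norm_nonneg _) (cbound n) 2
        _ = (r ^ 2) ^ (n + 1) := by ring
      rw [h1]
      calc ‖1 - u n‖ * ‖(shimizuAC a c n).2‖ ^ 2 ≤ (1 + M) * ((r ^ 2) ^ (n + 1)) := by
            apply mul_le_mul h2 h3 (by positivity) (by linarith)
        _ ≤ (‖a * c‖ + 1 + M) * (r ^ 2) ^ (n + 1) := by
            apply mul_le_mul_of_nonneg_right _ (by positivity)
            linarith [norm_nonneg (a * c)]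
  have utend : Tendsto u atTop (nhds 0) := by
    rw [tendsto_zero_iff_norm_tendsto_zero]
    apply squeeze_zero (fun n => norm_nonneg _) ugeom
    simpa using (tendsto_pow_atTop_nhds_zero_of_lt_one (by positivity) hr2).const_mul
      (‖a * c‖ + 1 + M)
  have ctend : Tendsto (fun n => (shimizuAC a c n).2) atTop (nhds 0) := by
    rw [tendsto_zero_iff_norm_tendsto_zero]
    apply squeeze_zero (fun n => norm_nonneg _) cbound
    have := (tendsto_pow_atTop_nhds_zero_of_lt_one hr0 hc1).comp (tendsto_add_atTop_nat 1)
    simpa [Function.comp_def] using this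
  have atend : Tendsto (fun n => (shimizuAC a c (n + 1)).1) atTop (nhds 1) := by
    have h1 : ∀ n, (shimizuAC a c (n + 1)).1 = 1 - u n := fun n => by
      simp [shimizuAC, hudef]
    simp only [h1]
    simpa using tendsto_const_nhds.sub utend
  -- the shifted sequence of matrices converges to T
  have hmat : ∀ n, ((B (n + 1) : SL(2, ℂ)) : Matrix (Fin 2) (Fin 2) ℂ) =
      !![1 - u n, ((shimizuAC a c n).1) ^ 2;
         -((shimizuAC a c n).2) ^ 2, 1 + u n] := by
    intro n
    have hcoe : ((B (n + 1) : SL(2, ℂ)) : Matrix (Fin 2) (Fin 2) ℂ)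
        = (((B n : SL(2, ℂ)) * T * (B n : SL(2, ℂ))⁻¹ : SL(2, ℂ)) :
            Matrix (Fin 2) (Fin 2) ℂ) := by
      have : (B (n + 1) : SL(2, ℂ)) = (B n : SL(2, ℂ)) * T * (B n : SL(2, ℂ))⁻¹ := by
        simp [hBdef, shimizuB]
      rw [this]
    rw [hcoe, hTdef, shimizu_conj_entries, (key n).1, (key n).2, hudef]
  have mtend : Tendsto (fun n => ((B (n + 2) : SL(2, ℂ)) : Matrix (Fin 2) (Fin 2) ℂ))
      atTop (nhds ((T : SL(2, ℂ)) : Matrix (Fin 2) (Fin 2) ℂ)) := by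
    have hform : ∀ n, ((B (n + 2) : SL(2, ℂ)) : Matrix (Fin 2) (Fin 2) ℂ) =
        !![1 - u (n + 1), ((shimizuAC a c (n + 1)).1) ^ 2;
           -((shimizuAC a c (n + 1)).2) ^ 2, 1 + u (n + 1)] := fun n => hmat (n + 1)
    simp only [hform]
    refine tendsto_pi_nhds.mpr ?_
    intro i
    refine tendsto_pi_nhds.mpr ?_
    intro j
    have ushift : Tendsto (fun n => u (n + 1)) atTop (nhds 0) :=
      utend.comp (tendsto_add_atTop_nat 1)
    have cshift : Tendsto (fun n => (shimizuAC a c (n + 1)).2) atTop (nhds 0) :=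
      ctend.comp (tendsto_add_atTop_nat 1)
    fin_cases i <;> fin_cases j <;> simp [hTdef]
    · simpa using tendsto_const_nhds.sub ushift
    · simpa [pow_two] using atend.mul atend
    · simpa [pow_two] using (cshift.mul cshift).neg
    · simpa using tendsto_const_nhds.add ushift
  -- lift convergence to the subgroup
  have btend : Tendsto (fun n => B (n + 2)) atTop (nhds (⟨T, hTH⟩ : H)) := by
    rw [tendsto_subtype_rng]
    apply tendsto_subtype_rng.mpr
    exact mtend
  rw [nhds_discrete, tendsto_pure] at btend
  obtain ⟨n, hn⟩ := btend.exists
  have : ((B (n + 2) : SL(2, ℂ)) : Matrix (Fin 2) (Fin 2) ℂ) 1 0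
      = ((T : SL(2, ℂ)) : Matrix (Fin 2) (Fin 2) ℂ) 1 0 := by rw [hn]
  rw [(key (n + 2)).2, hTdef] at this
  simp at this
  exact cne (n + 2) this
end

section
/- Any discrete subgroup of SL_2(ℂ) containing the matrix [[1,1],[0,1]] contains no matrix [[a,b],[c,d]] with ad - bc = 1 and 0 < |c| < 1. -/
open Matrix MatrixGroups

set_option linter.unreachableTactic false in
set_option linter.unusedTactic false in
lemma shimizu_mstep (a b c d : ℂ) (hd : a * d - b * c = 1) :
    !![a, b; c, d] * !![(1:ℂ), 1; 0, 1] * adjugate !![a, b; c, d]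
      = !![1 - a * c, a ^ 2; -c ^ 2, 1 + a * c] := by
  rw [Matrix.adjugate_fin_two]
  ext i j
  fin_cases i <;> fin_cases j <;>
    simp [Matrix.mul_apply, Fin.sum_univ_two] <;>
      first | ring1 | linear_combination hd | linear_combination -hd | linear_combination 2*hd | linear_combination -2*hd

lemma shimizu_step (S A : SL(2,ℂ)) (hA : (A : Matrix (Fin 2) (Fin 2) ℂ) = !![1, 1; 0, 1]) :
    ((S * A * S⁻¹ : SL(2,ℂ)) : Matrix (Fin 2) (Fin 2) ℂ) =
    !![1 - (S : Matrix (Fin 2) (Fin 2) ℂ) 0 0 * (S : Matrix (Fin 2) (Fin 2) ℂ) 1 0,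
        ((S : Matrix (Fin 2) (Fin 2) ℂ) 0 0)^2;
       -((S : Matrix (Fin 2) (Fin 2) ℂ) 1 0)^2,
        1 + (S : Matrix (Fin 2) (Fin 2) ℂ) 0 0 * (S : Matrix (Fin 2) (Fin 2) ℂ) 1 0] := by
  have hd : (S : Matrix (Fin 2) (Fin 2) ℂ) 0 0 * (S : Matrix (Fin 2) (Fin 2) ℂ) 1 1
      - (S : Matrix (Fin 2) (Fin 2) ℂ) 0 1 * (S : Matrix (Fin 2) (Fin 2) ℂ) 1 0 = 1 := by
    have := S.2
    rwa [Matrix.det_fin_two] at this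
  have h2 : ((S * A * S⁻¹ : SL(2,ℂ)) : Matrix (Fin 2) (Fin 2) ℂ)
      = (S : Matrix (Fin 2) (Fin 2) ℂ) * !![1, 1; 0, 1] * adjugate (S : Matrix (Fin 2) (Fin 2) ℂ) := by
    simp [hA]
  have hS := Matrix.eta_fin_two (S : Matrix (Fin 2) (Fin 2) ℂ)
  rw [h2]
  conv_lhs => rw [hS]
  rw [shimizu_mstep _ _ _ _ hd]

/-- The sequence of iterated conjugates `M, MAM⁻¹, (MAM⁻¹)A(MAM⁻¹)⁻¹, ...` -/
def shimizuSeq (A M : SL(2,ℂ)) : ℕ → SL(2,ℂ)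
  | 0 => M
  | (n+1) => shimizuSeq A M n * A * (shimizuSeq A M n)⁻¹

theorem stmt_19 (Γ : Subgroup SL(2, ℂ)) (hΓ : DiscreteTopology Γ)
    (A : SL(2, ℂ)) (hA : (A : Matrix (Fin 2) (Fin 2) ℂ) = !![1, 1; 0, 1])
    (hAΓ : A ∈ Γ) (M : SL(2, ℂ))
    (hc0 : 0 < ‖(M : Matrix (Fin 2) (Fin 2) ℂ) 1 0‖)
    (hc1 : ‖(M : Matrix (Fin 2) (Fin 2) ℂ) 1 0‖ < 1) :
    M ∉ Γ := by
  intro hMΓ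
  set f : ℕ → SL(2,ℂ) := shimizuSeq A M with hf
  set a : ℕ → ℂ := fun n => ((f n : Matrix (Fin 2) (Fin 2) ℂ)) 0 0 with ha
  set c : ℕ → ℂ := fun n => ((f n : Matrix (Fin 2) (Fin 2) ℂ)) 1 0 with hc
  -- recurrences
  have hstep : ∀ n, ((f (n+1) : Matrix (Fin 2) (Fin 2) ℂ))
      = !![1 - a n * c n, (a n)^2; -(c n)^2, 1 + a n * c n] := fun n =>
    shimizu_step (f n) A hA
  have hcs : ∀ n, c (n+1) = -(c n)^2 := by
    intro n
    show ((f (n+1) : Matrix (Fin 2) (Fin 2) ℂ)) 1 0 = _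
    rw [hstep n]
    simp
  have has : ∀ n, a (n+1) = 1 - a n * c n := by
    intro n
    show ((f (n+1) : Matrix (Fin 2) (Fin 2) ℂ)) 0 0 = _
    rw [hstep n]
    simp
  -- membership
  have hmem : ∀ n, f n ∈ Γ := by
    intro n
    induction n with
    | zero => exact hMΓ
    | succ n ih => exact mul_mem (mul_mem ih hAΓ) (inv_mem ih)
  -- c n ≠ 0
  have hcne : ∀ n, c n ≠ 0 := by
    intro n
    induction n with
    | zero =>
      intro h
      have h0 : (M : Matrix (Fin 2) (Fin 2) ℂ) 1 0 = 0 := h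
      rw [h0] at hc0
      simp at hc0
    | succ n ih =>
      rw [hcs n]
      simpa using pow_ne_zero 2 ih
  set r : ℝ := ‖(M : Matrix (Fin 2) (Fin 2) ℂ) 1 0‖ with hr
  have hr0 : 0 < r := hc0
  have hr1 : r < 1 := hc1
  -- |c n| ≤ r^(n+1)
  have hcb : ∀ n, ‖c n‖ ≤ r ^ (n + 1) := by
    intro n
    induction n with
    | zero => simp [hr]; exact le_refl _
    | succ n ih =>
      rw [hcs n]
      have h1 : ‖-(c n)^2‖ = ‖c n‖ * ‖c n‖ := by
        rw [norm_neg, norm_pow]; ring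
      rw [h1]
      have hcr : ‖c n‖ ≤ r := le_trans ih (by
        calc r ^ (n+1) ≤ r ^ 1 := pow_le_pow_of_le_one hr0.le hr1.le (by omega)
        _ = r := pow_one r)
      calc ‖c n‖ * ‖c n‖ ≤ r ^ (n+1) * r :=
            mul_le_mul ih hcr (norm_nonneg _) (pow_nonneg hr0.le _)
        _ = r ^ (n + 1 + 1) := by ring
  -- |a n| ≤ C
  set C : ℝ := ‖a 0‖ + 1 / (1 - r) with hC
  have h1r : 0 < 1 - r := by linarith
  have hCge : 1 / (1 - r) ≤ C := by
    have : 0 ≤ ‖a 0‖ := norm_nonneg _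
    linarith
  have hC0 : 0 < C := lt_of_lt_of_le (by positivity) hCge
  have hab : ∀ n, ‖a n‖ ≤ C := by
    intro n
    induction n with
    | zero =>
      have : (0:ℝ) < 1 / (1 - r) := by positivity
      rw [hC]; linarith
    | succ n ih =>
      rw [has n]
      have h1 : ‖1 - a n * c n‖ ≤ 1 + ‖a n‖ * ‖c n‖ := by
        calc ‖1 - a n * c n‖ ≤ ‖(1:ℂ)‖ + ‖a n * c n‖ :=
              norm_sub_le _ _
          _ = 1 + ‖a n‖ * ‖c n‖ := by rw [norm_one, norm_mul]
      have hcr : ‖c n‖ ≤ r := le_trans (hcb n) (by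
        calc r ^ (n+1) ≤ r ^ 1 := pow_le_pow_of_le_one hr0.le hr1.le (by omega)
        _ = r := pow_one r)
      have h2 : ‖a n‖ * ‖c n‖ ≤ C * r :=
        mul_le_mul ih hcr (norm_nonneg _) hC0.le
      have h3 : 1 + C * r ≤ C := by
        have h4 : 1 ≤ C * (1 - r) := by
          rw [div_le_iff₀ h1r] at hCge
          linarith [hCge]
        nlinarith
      linarith
  -- |a n * c n| ≤ C * r^(n+1)
  have hu : ∀ n, ‖a n * c n‖ ≤ C * r ^ (n + 1) := by
    intro n
    rw [norm_mul]
    exact mul_le_mul (hab n) (hcb n) (norm_nonneg _) hC0.le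
  -- geometric bound tends to 0
  have hgeo : Filter.Tendsto (fun n : ℕ => C * r ^ (n + 1)) Filter.atTop (nhds 0) := by
    have h1 : Filter.Tendsto (fun n : ℕ => r ^ n) Filter.atTop (nhds 0) :=
      tendsto_pow_atTop_nhds_zero_of_lt_one hr0.le hr1
    have h2 : Filter.Tendsto (fun n : ℕ => r ^ (n + 1)) Filter.atTop (nhds 0) :=
      (Filter.tendsto_add_atTop_iff_nat 1).mpr h1
    simpa using h2.const_mul C
  -- c n → 0
  have hC1 : 1 ≤ C :=
    le_trans (by rw [le_div_iff₀ h1r]; linarith) hCge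
  have hcb' : ∀ n, ‖c n‖ ≤ C * r ^ (n + 1) := by
    intro n
    refine le_trans (hcb n) ?_
    nlinarith [pow_nonneg hr0.le (n+1)]
  have hctend : Filter.Tendsto c Filter.atTop (nhds 0) := by
    rw [tendsto_zero_iff_norm_tendsto_zero]
    exact squeeze_zero (fun n => norm_nonneg _) hcb' hgeo
  -- a n * c n → 0
  have hactend : Filter.Tendsto (fun n => a n * c n) Filter.atTop (nhds 0) := by
    rw [tendsto_zero_iff_norm_tendsto_zero]
    exact squeeze_zero (fun n => norm_nonneg _) hu hgeo
  -- a n → 1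
  have hatend : Filter.Tendsto a Filter.atTop (nhds 1) := by
    rw [← Filter.tendsto_add_atTop_iff_nat 1]
    have : (fun n => a (n + 1)) = fun n => 1 - a n * c n := by
      funext n; exact has n
    rw [this]
    simpa using (tendsto_const_nhds (x := (1:ℂ))).sub hactend
  -- matrix-level convergence
  have hmat : Filter.Tendsto (fun n => ((f n : Matrix (Fin 2) (Fin 2) ℂ)))
      Filter.atTop (nhds (A : Matrix (Fin 2) (Fin 2) ℂ)) := by
    rw [← Filter.tendsto_add_atTop_iff_nat 1]
    have heq : (fun n => ((f (n+1) : Matrix (Fin 2) (Fin 2) ℂ)))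
        = fun n => !![1 - a n * c n, (a n)^2; -(c n)^2, 1 + a n * c n] := by
      funext n; exact hstep n
    rw [heq, hA]
    apply tendsto_pi_nhds.2
    intro i
    apply tendsto_pi_nhds.2
    intro j
    fin_cases i <;> fin_cases j <;> simp
    · simpa using (tendsto_const_nhds (x := (1:ℂ))).sub hactend
    · have := hatend.mul hatend
      simpa [pow_two] using this
    · simpa [pow_two] using (hctend.mul hctend).neg
    · simpa using (tendsto_const_nhds (x := (1:ℂ))).add hactend
  -- SL(2,ℂ)-level convergence
  have hSL : Filter.Tendsto f Filter.atTop (nhds A) := by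
    refine tendsto_subtype_rng.mpr ?_
    exact hmat
  -- Γ-level convergence
  set g : ℕ → Γ := fun n => ⟨f n, hmem n⟩ with hg
  have hGt : Filter.Tendsto g Filter.atTop (nhds (⟨A, hAΓ⟩ : Γ)) := by
    rw [tendsto_subtype_rng]
    exact hSL
  rw [nhds_discrete, Filter.tendsto_pure] at hGt
  obtain ⟨n, hn⟩ := hGt.exists
  have hfn : f n = A := congrArg Subtype.val hn
  have : c n = 0 := by
    rw [hc]
    show ((f n : Matrix (Fin 2) (Fin 2) ℂ)) 1 0 = 0
    rw [hfn, hA]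
    simp
  exact hcne n this
end
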